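/- In the braid group Br_{n+1}, for i < j, the square of the longest element lift satisfies ℓ_{i,j}² = (s_j ··· s_i)(s_i ··· s_j) · ℓ_{i,j-1}². -/
import Mathlib


namespace BraidPaper

/-- The braid relations on `n` generators `s_1, ..., s_n` (indexed by `Fin n`):
far-away commutativity and the braid relation for adjacent generators.  The
corresponding presented group is the Artin braid group `Br_{n+1}`. -/
def braidRelsSet (n : ℕ) : Set (FreeGroup (Fin n)) :=
  {r | (∃ i j : Fin n, (i : ℕ) + 2 ≤ (j : ℕ) ∧
        r = FreeGroup.of i * FreeGroup.of j * (FreeGroup.of i)⁻¹ * (FreeGroup.of j)⁻¹) ∨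
       (∃ i j : Fin n, (i : ℕ) + 1 = (j : ℕ) ∧
        r = FreeGroup.of i * FreeGroup.of j * FreeGroup.of i *
            (FreeGroup.of j)⁻¹ * (FreeGroup.of i)⁻¹ * (FreeGroup.of j)⁻¹)}

/-- The Artin braid group `Br_{n+1}` on generators `s_1, ..., s_n`. -/
abbrev BraidGroup (n : ℕ) := PresentedGroup (braidRelsSet n)

/-- The generator `s_i` of `Br_{n+1}`, for `1 ≤ i ≤ n` (junk value `1` otherwise). -/
def gen (n : ℕ) (i : ℕ) : BraidGroup n :=
  if h : 1 ≤ i ∧ i ≤ n then PresentedGroup.of (⟨i - 1, by omega⟩ : Fin n) else 1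

/-- The descending product `s_j s_{j-1} ⋯ s_i` (equal to `1` if `j < i`). -/
def desc (n j i : ℕ) : BraidGroup n :=
  (((List.range' i (j + 1 - i)).reverse).map (gen n)).prod

/-- The ascending product `s_i s_{i+1} ⋯ s_j` (equal to `1` if `j < i`). -/
def asc (n i j : ℕ) : BraidGroup n :=
  ((List.range' i (j + 1 - i)).map (gen n)).prod

/-- The standard lift `ℓ_{i,j} = (s_i)(s_{i+1}s_i)⋯(s_j⋯s_i)` of the longest element
over the interval `[i,j]`, with the convention `ℓ_{i,j} = 1` when `j < i`. -/
def ell (n i j : ℕ) : BraidGroup n :=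
  ((List.range' i (j + 1 - i)).map (fun k => desc n k i)).prod

lemma rel_eq_one {n : ℕ} {r : FreeGroup (Fin n)} (h : r ∈ braidRelsSet n) :
    PresentedGroup.mk (braidRelsSet n) r = 1 :=
  (QuotientGroup.eq_one_iff r).mpr (Subgroup.subset_normalClosure h)

lemma gen_comm {n i k : ℕ} (h : i + 2 ≤ k) : Commute (gen n i) (gen n k) := by
  by_cases hi : 1 ≤ i ∧ i ≤ n
  · by_cases hk : 1 ≤ k ∧ k ≤ n
    · have hrel : (FreeGroup.of (⟨i-1, by omega⟩ : Fin n) * FreeGroup.of (⟨k-1, by omega⟩ : Fin n) *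
          (FreeGroup.of (⟨i-1, by omega⟩ : Fin n))⁻¹ * (FreeGroup.of (⟨k-1, by omega⟩ : Fin n))⁻¹)
          ∈ braidRelsSet n := by
        left; exact ⟨⟨i-1, by omega⟩, ⟨k-1, by omega⟩, by simp; omega, rfl⟩
      have := rel_eq_one hrel
      simp only [map_mul, map_inv] at this
      unfold gen
      rw [dif_pos hi, dif_pos hk]
      have h2 : ∀ x : Fin n, PresentedGroup.mk (braidRelsSet n) (FreeGroup.of x) =
          PresentedGroup.of x := fun _ => rfl
      rw [h2, h2] at this
      rw [mul_inv_eq_one, mul_inv_eq_iff_eq_mul] at this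
      exact this
    · unfold gen; rw [dif_neg hk]; exact Commute.one_right _
  · unfold gen; rw [dif_neg hi]; exact Commute.one_left _

lemma gen_braid {n i : ℕ} (hi : 1 ≤ i) (hn : i + 1 ≤ n) :
    gen n i * gen n (i + 1) * gen n i = gen n (i + 1) * gen n i * gen n (i + 1) := by
  have hrel : (FreeGroup.of (⟨i-1, by omega⟩ : Fin n) * FreeGroup.of (⟨i, by omega⟩ : Fin n) *
      FreeGroup.of (⟨i-1, by omega⟩ : Fin n) * (FreeGroup.of (⟨i, by omega⟩ : Fin n))⁻¹ *
      (FreeGroup.of (⟨i-1, by omega⟩ : Fin n))⁻¹ * (FreeGroup.of (⟨i, by omega⟩ : Fin n))⁻¹)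
      ∈ braidRelsSet n := by
    right; exact ⟨⟨i-1, by omega⟩, ⟨i, by omega⟩, by simp; omega, rfl⟩
  have := rel_eq_one hrel
  simp only [map_mul, map_inv] at this
  unfold gen
  rw [dif_pos ⟨hi, by omega⟩, dif_pos ⟨by omega, hn⟩]
  have h2 : ∀ x : Fin n, PresentedGroup.mk (braidRelsSet n) (FreeGroup.of x) =
      PresentedGroup.of x := fun _ => rfl
  rw [h2, h2] at this
  rw [mul_inv_eq_one, mul_inv_eq_iff_eq_mul, mul_inv_eq_iff_eq_mul] at this
  have e : (⟨i + 1 - 1, by omega⟩ : Fin n) = (⟨i, by omega⟩ : Fin n) := rfl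
  rw [e]
  exact this

/-! ### Combinatorial unfoldings -/

lemma desc_of_lt {n j i : ℕ} (h : j < i) : desc n j i = 1 := by
  unfold desc
  have : j + 1 - i = 0 := by omega
  simp [this]

lemma asc_of_lt {n j i : ℕ} (h : j < i) : asc n i j = 1 := by
  unfold asc
  have : j + 1 - i = 0 := by omega
  simp [this]

lemma ell_of_lt {n j i : ℕ} (h : j < i) : ell n i j = 1 := by
  unfold ell
  have : j + 1 - i = 0 := by omega
  simp [this]

lemma desc_self (n i : ℕ) : desc n i i = gen n i := by
  unfold desc
  have : i + 1 - i = 1 := by omega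
  simp [this]

lemma asc_self (n i : ℕ) : asc n i i = gen n i := by
  unfold asc
  have : i + 1 - i = 1 := by omega
  simp [this]

lemma desc_succ {n j i : ℕ} (h : i ≤ j + 1) :
    desc n (j + 1) i = gen n (j + 1) * desc n j i := by
  unfold desc
  have h1 : (j + 1) + 1 - i = (j + 1 - i) + 1 := by omega
  rw [h1, List.range'_1_concat]
  have h2 : i + (j + 1 - i) = j + 1 := by omega
  rw [h2]
  simp

lemma asc_succ {n j i : ℕ} (h : i ≤ j + 1) :
    asc n i (j + 1) = asc n i j * gen n (j + 1) := by
  unfold asc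
  have h1 : (j + 1) + 1 - i = (j + 1 - i) + 1 := by omega
  rw [h1, List.range'_1_concat]
  have h2 : i + (j + 1 - i) = j + 1 := by omega
  rw [h2]
  simp

lemma asc_cons {n j i : ℕ} (h : i ≤ j) :
    asc n i j = gen n i * asc n (i + 1) j := by
  unfold asc
  have h1 : j + 1 - i = (j + 1 - (i + 1)) + 1 := by omega
  rw [h1, List.range'_succ]
  simp

lemma ell_succ {n j i : ℕ} (h : i ≤ j + 1) :
    ell n i (j + 1) = ell n i j * desc n (j + 1) i := by
  unfold ell
  have h1 : (j + 1) + 1 - i = (j + 1 - i) + 1 := by omega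
  rw [h1, List.range'_1_concat]
  have h2 : i + (j + 1 - i) = j + 1 := by omega
  rw [h2]
  simp

/-! ### Commutation with far generators -/

lemma comm_gen_desc {n m j i : ℕ} (h : j + 2 ≤ m ∨ m + 2 ≤ i) :
    Commute (gen n m) (desc n j i) := by
  apply Commute.list_prod_right
  intro x hx
  simp only [List.mem_map, List.mem_reverse] at hx
  obtain ⟨k, hk, rfl⟩ := hx
  rw [List.mem_range'] at hk
  obtain ⟨t, ht, rfl⟩ := hk
  rcases h with h | h
  · exact (gen_comm (by omega)).symm
  · exact gen_comm (by omega)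

lemma comm_gen_asc {n m j i : ℕ} (h : j + 2 ≤ m ∨ m + 2 ≤ i) :
    Commute (gen n m) (asc n i j) := by
  apply Commute.list_prod_right
  intro x hx
  simp only [List.mem_map] at hx
  obtain ⟨k, hk, rfl⟩ := hx
  rw [List.mem_range'] at hk
  obtain ⟨t, ht, rfl⟩ := hk
  rcases h with h | h
  · exact (gen_comm (by omega)).symm
  · exact gen_comm (by omega)

lemma comm_gen_ell {n m j i : ℕ} (h : j + 2 ≤ m ∨ m + 2 ≤ i) :
    Commute (gen n m) (ell n i j) := by
  apply Commute.list_prod_right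
  intro x hx
  simp only [List.mem_map] at hx
  obtain ⟨k, hk, rfl⟩ := hx
  rw [List.mem_range'] at hk
  obtain ⟨t, ht, rfl⟩ := hk
  apply comm_gen_desc
  rcases h with h | h
  · left; omega
  · right; omega

/-! ### Shift lemmas -/

lemma desc_shift {n i k j : ℕ} (hi : 1 ≤ i) (hik : i ≤ k) (hkj : k < j) :
    j ≤ n → gen n k * desc n j i = desc n j i * gen n (k + 1) := by
  induction j, hkj using Nat.le_induction with
  | base =>
    intro hn
    have hd : desc n (k + 1) i = gen n (k + 1) * (gen n k * desc n (k - 1) i) := by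
      rw [desc_succ (by omega)]
      congr 1
      conv_lhs => rw [show k = (k - 1) + 1 by omega, desc_succ (by omega)]
      rw [show k - 1 + 1 = k by omega]
    have hb := gen_braid (hi.trans hik) hn
    have hc : Commute (gen n (k + 1)) (desc n (k - 1) i) :=
      comm_gen_desc (Or.inl (by omega))
    rw [hd, ← mul_assoc, ← mul_assoc, hb, mul_assoc, hc.eq]
    simp [mul_assoc]
  | succ j hj ih =>
    intro hn
    have hd : desc n (j + 1) i = gen n (j + 1) * desc n j i := desc_succ (by omega)
    have hc : Commute (gen n k) (gen n (j + 1)) := gen_comm (by omega)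
    rw [hd, ← mul_assoc, hc.eq, mul_assoc, ih (by omega)]
    simp [mul_assoc]

lemma asc_shift {n i k j : ℕ} (hi : 1 ≤ i) (hik : i ≤ k) (hkj : k < j) (hn : j ≤ n) :
    gen n (k + 1) * asc n i j = asc n i j * gen n k := by
  have main : ∀ d i', 1 ≤ i' → i' ≤ k → k - i' = d →
      gen n (k + 1) * asc n i' j = asc n i' j * gen n k := by
    intro d
    induction d with
    | zero =>
      intro i' hi' hik' hd
      have hik2 : i' = k := by omega
      subst hik2
      have ha : asc n i' j = gen n i' * (gen n (i' + 1) * asc n (i' + 2) j) := by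
        rw [asc_cons (by omega)]
        congr 1
        exact asc_cons (by omega)
      have hb := (gen_braid (n := n) (i := i') hi' (show i' + 1 ≤ n by omega)).symm
      have hc : Commute (gen n i') (asc n (i' + 2) j) :=
        comm_gen_asc (Or.inr (by omega))
      rw [ha, ← mul_assoc, ← mul_assoc, hb, mul_assoc, mul_assoc, hc.eq]
      simp [mul_assoc]
    | succ d ih =>
      intro i' hi' hik' hd
      have hlt : i' < k := by omega
      have ha : asc n i' j = gen n i' * asc n (i' + 1) j := asc_cons (by omega)
      have hc : Commute (gen n (k + 1)) (gen n i') := (gen_comm (by omega)).symm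
      rw [ha, ← mul_assoc, hc.eq, mul_assoc, ih (i' + 1) (by omega) (by omega) (by omega)]
      simp [mul_assoc]
  exact main (k - i) i hi hik rfl

lemma ell_swap {n i j : ℕ} (hi : 1 ≤ i) (hij : i ≤ j) :
    j ≤ n → ell n i (j - 1) * desc n j i = asc n i j * ell n i (j - 1) := by
  induction j, hij using Nat.le_induction with
  | base =>
    intro hn
    rw [ell_of_lt (by omega), desc_self, asc_self, one_mul, mul_one]
  | succ j hj ih =>
    intro hn
    simp only [Nat.add_sub_cancel]
    have hIH := ih (by omega)
    have hell : ell n i j = ell n i (j - 1) * desc n j i := by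
      conv_lhs => rw [show j = (j - 1) + 1 by omega, ell_succ (by omega)]
      rw [show j - 1 + 1 = j by omega]
    have hell2 : ell n i j = asc n i j * ell n i (j - 1) := by rw [hell, hIH]
    have hd : desc n (j + 1) i = gen n (j + 1) * desc n j i := desc_succ (by omega)
    have hc : Commute (ell n i (j - 1)) (gen n (j + 1)) :=
      (comm_gen_ell (Or.inl (by omega))).symm
    calc ell n i j * desc n (j + 1) i
        = asc n i j * ell n i (j - 1) * (gen n (j + 1) * desc n j i) := by rw [hell2, hd]
      _ = asc n i j * (ell n i (j - 1) * gen n (j + 1)) * desc n j i := by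
          simp [mul_assoc]
      _ = asc n i j * (gen n (j + 1) * ell n i (j - 1)) * desc n j i := by rw [hc.eq]
      _ = (asc n i j * gen n (j + 1)) * (ell n i (j - 1) * desc n j i) := by
          simp [mul_assoc]
      _ = asc n i (j + 1) * ell n i j := by rw [← asc_succ (by omega), hIH, ← hell2]

lemma ell_comm_key {n i j : ℕ} (hi : 1 ≤ i) (hij : i < j) (hn : j ≤ n) :
    Commute (ell n i (j - 1)) (desc n j i * asc n i j) := by
  apply Commute.list_prod_left
  intro x hx
  simp only [List.mem_map] at hx
  obtain ⟨k, hk, rfl⟩ := hx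
  rw [List.mem_range'] at hk
  obtain ⟨t, ht, rfl⟩ := hk
  apply Commute.list_prod_left
  intro y hy
  simp only [List.mem_map, List.mem_reverse] at hy
  obtain ⟨m, hm, rfl⟩ := hy
  rw [List.mem_range'] at hm
  obtain ⟨u, hu, rfl⟩ := hm
  -- m := i + 1 * u, with i + u ≤ i + t ≤ j - 1
  show gen n (i + 1 * u) * (desc n j i * asc n i j) = (desc n j i * asc n i j) * gen n (i + 1 * u)
  have hmle : i + 1 * u < j := by omega
  rw [← mul_assoc, desc_shift hi (by omega) hmle hn, mul_assoc,
    asc_shift hi (by omega) hmle hn, ← mul_assoc]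

/-- `ℓ_{i,j}² = (s_j ⋯ s_i)(s_i ⋯ s_j) ⬝ ℓ_{i,j-1}²` for `i < j`. -/
theorem ell_sq_factor (n i j : ℕ) (hi : 1 ≤ i) (hij : i < j) (hj : j ≤ n) :
    (ell n i j) ^ 2 = desc n j i * asc n i j * (ell n i (j - 1)) ^ 2 := by
  have hell : ell n i j = ell n i (j - 1) * desc n j i := by
    conv_lhs => rw [show j = (j - 1) + 1 by omega, ell_succ (by omega)]
    rw [show j - 1 + 1 = j by omega]
  have hell2 : ell n i j = asc n i j * ell n i (j - 1) := by
    rw [hell, ell_swap hi (by omega) hj]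
  have hkey := (ell_comm_key hi hij hj).eq
  calc (ell n i j) ^ 2
      = (ell n i (j - 1) * desc n j i) * (asc n i j * ell n i (j - 1)) := by
        rw [pow_two]; rw [← hell, ← hell2]
    _ = ell n i (j - 1) * (desc n j i * asc n i j) * ell n i (j - 1) := by
        simp [mul_assoc]
    _ = (desc n j i * asc n i j) * ell n i (j - 1) * ell n i (j - 1) := by rw [hkey]
    _ = desc n j i * asc n i j * (ell n i (j - 1)) ^ 2 := by rw [pow_two]; simp [mul_assoc]
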